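/- arXiv:2510.15447 — 2 statements merged into one kernel-verified Lean document; each statement's English description precedes it below -/
import Mathlib

section
/- Let E : ℝ^n → ℝ be continuously differentiable and (m,b)-dissipative, i.e., ⟨u, ∇E(u)⟩ ≥ m‖u‖² − b for all u with m > 0, b ≥ 0. Then the partition function Z = ∫ exp(−E(u)) du is finite. -/
open MeasureTheory Real
open scoped RealInnerProductSpace

lemma gauss_integrable {V : Type*} [NormedAddCommGroup V] [InnerProductSpace ℝ V]
    [FiniteDimensional ℝ V] [MeasurableSpace V] [BorelSpace V] {c : ℝ} (hc : 0 < c) :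
    Integrable (fun v : EuclideanSpace ℝ (Fin n) => Real.exp (-c * ‖v‖ ^ 2)) := by
  have h := (GaussianFourier.integrable_cexp_neg_mul_sq_norm_add (V := EuclideanSpace ℝ (Fin n)) (b := (c : ℂ))
    (by simpa using hc) 0 0).norm
  simpa [Complex.norm_exp, ← Complex.ofReal_pow, Complex.ofReal_re] using h

theorem stmt_0 (n : ℕ) (E : EuclideanSpace ℝ (Fin n) → ℝ)
    (hE : ContDiff ℝ 1 E) (m b : ℝ) (hm : 0 < m) (hb : 0 ≤ b)
    (hdiss : ∀ u : EuclideanSpace ℝ (Fin n), m * ‖u‖ ^ 2 - b ≤ ⟪u, gradient E u⟫) :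
    Integrable (fun u : EuclideanSpace ℝ (Fin n) => Real.exp (-E u)) := by
  have hdiff : Differentiable ℝ E := hE.differentiable one_ne_zero
  -- lower bound of E on the closed unit ball
  obtain ⟨x₀, -, hx₀'⟩ := (isCompact_closedBall (0 : EuclideanSpace ℝ (Fin n)) 1).exists_isMinOn
    ⟨0, Metric.mem_closedBall_self zero_le_one⟩ hE.continuous.continuousOn
  have hx₀ : ∀ y ∈ Metric.closedBall (0 : EuclideanSpace ℝ (Fin n)) 1, E x₀ ≤ E y :=
    fun y hy => hx₀' hy
  set C := E x₀ with hC
  -- derivative along rays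
  have hray : ∀ (v : EuclideanSpace ℝ (Fin n)) (t : ℝ), HasDerivAt (fun s : ℝ => E (s • v)) ⟪gradient E (t • v), v⟫ t := by
    intro v t
    have hgrad : HasFDerivAt E (InnerProductSpace.toDual ℝ (EuclideanSpace ℝ (Fin n)) (gradient E (t • v))) (t • v) :=
      hasGradientAt_iff_hasFDerivAt.mp (hdiff (t • v)).hasGradientAt
    have hline : HasDerivAt (fun s : ℝ => s • v) v t := by
      simpa using (hasDerivAt_id t).smul_const v
    exact (hgrad.comp_hasDerivAt t hline :)
  -- key lower bound for ‖u‖ ≥ 1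
  have key : ∀ u : EuclideanSpace ℝ (Fin n), 1 ≤ ‖u‖ → C + (m / 2 * ‖u‖ ^ 2 - b * ‖u‖) - (m / 2 - b) ≤ E u := by
    intro u hu
    have hR : (0 : ℝ) < ‖u‖ := lt_of_lt_of_le one_pos hu
    set v : EuclideanSpace ℝ (Fin n) := ‖u‖⁻¹ • u with hv
    have hvnorm : ‖v‖ = 1 := by
      rw [hv, norm_smul, norm_inv, norm_norm, inv_mul_cancel₀ (ne_of_gt hR)]
    set φ : ℝ → ℝ := fun t => E (t • v) - (m / 2 * t ^ 2 - b * t) with hφ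
    have hφd : ∀ t : ℝ, HasDerivAt φ (⟪gradient E (t • v), v⟫ - (m * t - b)) t := by
      intro t
      have h1 : HasDerivAt (fun t : ℝ => m / 2 * t ^ 2 - b * t) (m * t - b) t := by
        have := ((hasDerivAt_pow 2 t).const_mul (m / 2)).sub ((hasDerivAt_id t).const_mul b)
        exact this.congr_deriv (by norm_num; ring)
      exact (hray v t).sub h1
    have hmono : MonotoneOn φ (Set.Icc 1 ‖u‖) := by
      apply monotoneOn_of_deriv_nonneg (convex_Icc 1 ‖u‖)
      · exact Continuous.continuousOn (by
          have : Continuous fun t : ℝ => E (t • v) :=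
            hE.continuous.comp (continuous_id.smul continuous_const)
          fun_prop)
      · intro t ht
        exact ((hφd t).differentiableAt).differentiableWithinAt
      · intro t ht
        rw [interior_Icc] at ht
        rw [(hφd t).deriv]
        have ht1 : (1 : ℝ) ≤ t := le_of_lt ht.1
        have htpos : (0 : ℝ) < t := lt_of_lt_of_le one_pos ht1
        have hd := hdiss (t • v)
        rw [norm_smul, hvnorm, mul_one, Real.norm_eq_abs, abs_of_pos htpos,
          inner_smul_left] at hd
        have h2 : m * t ^ 2 - b ≤ t * ⟪v, gradient E (t • v)⟫ := by simpa using hd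
        have h3 : m * t - b / t ≤ ⟪v, gradient E (t • v)⟫ := by
          rw [← mul_le_mul_iff_of_pos_left htpos]
          calc t * (m * t - b / t) = m * t ^ 2 - b := by field_simp
            _ ≤ t * ⟪v, gradient E (t • v)⟫ := h2
        have h4 : m * t - b ≤ ⟪v, gradient E (t • v)⟫ := by
          refine le_trans ?_ h3
          have : b / t ≤ b := by
            rw [div_le_iff₀ htpos]
            nlinarith
          linarith
        rw [real_inner_comm] at h4
        linarith
    have hmem1 : (1 : ℝ) ∈ Set.Icc 1 ‖u‖ := ⟨le_refl 1, hu⟩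
    have hmem2 : ‖u‖ ∈ Set.Icc 1 ‖u‖ := ⟨hu, le_refl _⟩
    have hle := hmono hmem1 hmem2 hu
    have huv : ‖u‖ • v = u := by
      rw [hv, smul_smul, mul_inv_cancel₀ (ne_of_gt hR), one_smul]
    have hvball : v ∈ Metric.closedBall (0 : EuclideanSpace ℝ (Fin n)) 1 := by
      simp [hvnorm]
    have hCv : C ≤ E v := hx₀ v hvball
    rw [hφ] at hle
    simp only [one_smul, huv] at hle
    have : E (1 • v) = E v := by rw [one_smul]
    nlinarith [hle]
  -- global bound: -E u ≤ A - (m/4) ‖u‖²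
  set A : ℝ := -C + m / 2 + b ^ 2 / m with hA
  have bound : ∀ u : EuclideanSpace ℝ (Fin n), -E u ≤ A - m / 4 * ‖u‖ ^ 2 := by
    intro u
    rcases le_or_gt 1 ‖u‖ with h | h
    · have hk := key u h
      have hAM : b * ‖u‖ ≤ m / 4 * ‖u‖ ^ 2 + b ^ 2 / m := by
        have h4 : b * ‖u‖ * (4 * m) ≤ (m / 4 * ‖u‖ ^ 2 + b ^ 2 / m) * (4 * m) := by
          have he : (m / 4 * ‖u‖ ^ 2 + b ^ 2 / m) * (4 * m) = m ^ 2 * ‖u‖ ^ 2 + 4 * b ^ 2 := by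
            field_simp
          rw [he]; nlinarith [sq_nonneg (m * ‖u‖ - 2 * b)]
        exact le_of_mul_le_mul_right h4 (by positivity)
      nlinarith
    · have hCu : C ≤ E u := hx₀ u (by simp [Metric.mem_closedBall]; exact h.le)
      have hn : (0 : ℝ) ≤ ‖u‖ := norm_nonneg u
      have : m / 4 * ‖u‖ ^ 2 ≤ m / 4 := by nlinarith [pow_le_one₀ hn h.le (n := 2)]
      have hbm : 0 ≤ b ^ 2 / m := by positivity
      nlinarith
  refine Integrable.mono' ((gauss_integrable (V := EuclideanSpace ℝ (Fin n)) (by positivity : (0:ℝ) < m / 4)).const_mul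
    (Real.exp A)) ?_ ?_
  · exact (Real.continuous_exp.comp hE.continuous.neg).aestronglyMeasurable
  · refine Filter.Eventually.of_forall fun u => ?_
    rw [Real.norm_eq_abs, abs_of_pos (Real.exp_pos _), ← Real.exp_add]
    apply Real.exp_le_exp.mpr
    have := bound u
    linarith
end

section
/- Let E : ℝ^n → ℝ be C¹ with L-Lipschitz gradient and (m,b)-dissipative (⟨u, ∇E(u)⟩ ≥ m‖u‖² − b). Then E(u) ≥ E(0) + (m/2)‖u‖² − b·log(1 + ‖u‖) − C for some constant C depending only on m, b (in particular E is coercive: E(u) → ∞ as ‖u‖ → ∞). -/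
set_option maxHeartbeats 1000000

open MeasureTheory Real Filter
open scoped RealInnerProductSpace

theorem stmt_1 (n : ℕ) (E : EuclideanSpace ℝ (Fin n) → ℝ)
    (hE : ContDiff ℝ 1 E) (L : NNReal) (hLip : LipschitzWith L (gradient E))
    (m b : ℝ) (hm : 0 < m) (hb : 0 ≤ b)
    (hdiss : ∀ u : EuclideanSpace ℝ (Fin n), m * ‖u‖ ^ 2 - b ≤ ⟪u, gradient E u⟫) :
    ∃ C : ℝ,
      (∀ u : EuclideanSpace ℝ (Fin n),
        E 0 + (m / 2) * ‖u‖ ^ 2 - b * Real.log (1 + ‖u‖) - C ≤ E u) ∧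
      Tendsto E (comap norm atTop) atTop := by
  have hdiff : Differentiable ℝ E := hE.differentiable one_ne_zero
  set G : ℝ := ‖gradient E 0‖ with hGdef
  set C : ℝ := G + (L : ℝ) / 2 + m / 2 with hCdef
  have hG0 : 0 ≤ G := norm_nonneg _
  have hL0 : (0:ℝ) ≤ L := NNReal.coe_nonneg L
  have hmain : ∀ u : EuclideanSpace ℝ (Fin n),
      E 0 + (m / 2) * ‖u‖ ^ 2 - b * Real.log (1 + ‖u‖) - C ≤ E u := by
    intro u
    set r : ℝ := ‖u‖ with hrdef
    have hr0 : 0 ≤ r := norm_nonneg u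
    set a : ℝ := (1 + r)⁻¹ with hadef
    have h1r : (0:ℝ) < 1 + r := by linarith
    have ha0 : 0 < a := inv_pos.mpr h1r
    have ha1 : a ≤ 1 := by
      rw [hadef]
      rw [inv_le_one_iff₀]
      right; linarith
    have har : a * r ≤ 1 := by
      rw [hadef, inv_mul_le_iff₀ h1r]
      nlinarith
    have har0 : 0 ≤ a * r := mul_nonneg ha0.le hr0
    set f : ℝ → ℝ := fun t => ⟪u, gradient E (t • u)⟫ with hfdef
    have hderiv : ∀ t : ℝ, HasDerivAt (fun s : ℝ => E (s • u)) (f t) t := by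
      intro t
      have h1 : HasDerivAt (fun s : ℝ => s • u) u t := by
        simpa using (hasDerivAt_id t).smul_const u
      have h2 := (hdiff (t • u)).hasGradientAt.hasFDerivAt
      have h3 := h2.comp_hasDerivAt t h1
      have h4 : (InnerProductSpace.toDual ℝ _ (gradient E (t • u))) u = f t := by
        rw [InnerProductSpace.toDual_apply_apply, real_inner_comm]
      exact h4 ▸ h3
    have hfc : Continuous f := by
      apply continuous_const.inner
      exact hLip.continuous.comp (continuous_id.smul continuous_const)
    have hint : ∀ p q : ℝ, IntervalIntegrable f volume p q := fun p q =>
      hfc.intervalIntegrable p q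
    have ftc : E u - E 0 = ∫ t in (0:ℝ)..1, f t := by
      have := intervalIntegral.integral_eq_sub_of_hasDerivAt
        (f := fun s : ℝ => E (s • u)) (fun t _ => hderiv t) (hint 0 1)
      simpa using this.symm
    have hsplit : (∫ t in (0:ℝ)..1, f t) =
        (∫ t in (0:ℝ)..a, f t) + ∫ t in a..(1:ℝ), f t :=
      (intervalIntegral.integral_add_adjacent_intervals (hint 0 a) (hint a 1)).symm
    have hcont1 : Continuous (fun t : ℝ => -(r * G) - (L:ℝ) * r ^ 2 * t) := by continuity
    -- bound on [0,a]
    have hb1 : (∫ t in (0:ℝ)..a, (-(r * G) - (L:ℝ) * r ^ 2 * t)) ≤ ∫ t in (0:ℝ)..a, f t := by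
      apply intervalIntegral.integral_mono_on ha0.le (hcont1.intervalIntegrable 0 a) (hint 0 a)
      intro t ht
      have ht0 : 0 ≤ t := ht.1
      have hnorm : ‖gradient E (t • u)‖ ≤ G + (L:ℝ) * t * r := by
        have := hLip.dist_le_mul (t • u) 0
        rw [dist_eq_norm, dist_eq_norm, sub_zero] at this
        have h4 : ‖gradient E (t • u)‖ - G ≤ (L:ℝ) * ‖t • u‖ :=
          le_trans (by rw [hGdef]; exact norm_sub_norm_le _ _) this
        have h5 : ‖t • u‖ = t * r := by
          rw [norm_smul, Real.norm_eq_abs, abs_of_nonneg ht0, hrdef]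
        nlinarith
      have h5 : |f t| ≤ r * ‖gradient E (t • u)‖ :=
        abs_real_inner_le_norm u (gradient E (t • u))
      have h6 : -(r * (G + (L:ℝ) * t * r)) ≤ f t := by
        nlinarith [neg_abs_le (f t), abs_nonneg (f t)]
      nlinarith
    have hcalc1 : (∫ t in (0:ℝ)..a, (-(r * G) - (L:ℝ) * r ^ 2 * t)) =
        -(r * G) * a - (L:ℝ) * r ^ 2 * (a ^ 2 / 2) := by
      rw [intervalIntegral.integral_sub (continuous_const.intervalIntegrable 0 a)
        ((by continuity : Continuous fun t : ℝ => (L:ℝ) * r ^ 2 * t).intervalIntegrable 0 a)]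
      rw [intervalIntegral.integral_const, intervalIntegral.integral_const_mul, integral_id]
      simp [smul_eq_mul]
      ring
    have hlow1 : -G - (L:ℝ) / 2 ≤ ∫ t in (0:ℝ)..a, f t := by
      refine le_trans ?_ hb1
      rw [hcalc1]
      have h1 : r * G * a ≤ G := by nlinarith
      have hsq : (a * r) ^ 2 ≤ 1 := by nlinarith
      have h2 : (L:ℝ) * r ^ 2 * (a ^ 2 / 2) ≤ (L:ℝ) / 2 := by nlinarith
      linarith
    -- bound on [a,1]
    have hne : ∀ x ∈ Set.uIcc a (1:ℝ), x ≠ 0 := by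
      intro x hx
      rw [Set.uIcc_of_le ha1] at hx
      exact ne_of_gt (lt_of_lt_of_le ha0 hx.1)
    have hcont2 : ContinuousOn (fun t : ℝ => m * r ^ 2 * t - b * t⁻¹) (Set.uIcc a 1) := by
      apply ContinuousOn.sub (Continuous.continuousOn (by continuity))
      exact continuousOn_const.mul ((continuousOn_inv₀).mono (fun x hx => hne x hx))
    have hint2 : IntervalIntegrable (fun t : ℝ => m * r ^ 2 * t - b * t⁻¹) volume a 1 :=
      hcont2.intervalIntegrable
    have hb2 : (∫ t in a..(1:ℝ), (m * r ^ 2 * t - b * t⁻¹)) ≤ ∫ t in a..(1:ℝ), f t := by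
      apply intervalIntegral.integral_mono_on ha1 hint2 (hint a 1)
      intro t ht
      have ht0 : 0 < t := lt_of_lt_of_le ha0 ht.1
      have h6 := hdiss (t • u)
      have h7 : ⟪t • u, gradient E (t • u)⟫ = t * f t :=
        real_inner_smul_left u (gradient E (t • u)) t
      have h8 : ‖t • u‖ = t * r := by
        rw [norm_smul, Real.norm_eq_abs, abs_of_nonneg ht0.le, hrdef]
      rw [h7, h8] at h6
      rw [sub_le_iff_le_add, ← mul_le_mul_iff_right₀ ht0]
      calc t * (m * r ^ 2 * t) = m * (t * r) ^ 2 := by ring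
        _ ≤ t * f t + b := by nlinarith
        _ = t * (f t + b * t⁻¹) := by field_simp
    have hcalc2 : (∫ t in a..(1:ℝ), (m * r ^ 2 * t - b * t⁻¹)) =
        m * r ^ 2 * ((1 - a ^ 2) / 2) - b * Real.log (1 + r) := by
      rw [intervalIntegral.integral_sub (g := fun t : ℝ => b * t⁻¹)
        ((Continuous.continuousOn (by continuity)).intervalIntegrable)
        ((continuousOn_const.mul ((continuousOn_inv₀).mono
          (fun x hx => hne x hx))).intervalIntegrable)]
      rw [intervalIntegral.integral_const_mul, intervalIntegral.integral_const_mul, integral_id,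
        integral_inv (fun h => (hne 0 h) rfl)]
      rw [one_div, hadef, inv_inv]
      ring
    have hlow2 : m / 2 * r ^ 2 - m / 2 - b * Real.log (1 + r) ≤ ∫ t in a..(1:ℝ), f t := by
      refine le_trans ?_ hb2
      rw [hcalc2]
      have hsq : (a * r) ^ 2 ≤ 1 := by nlinarith
      have h2 : m * r ^ 2 * a ^ 2 ≤ m := by nlinarith
      nlinarith
    have heq : E u = E 0 + (∫ t in (0:ℝ)..a, f t) + ∫ t in a..(1:ℝ), f t := by
      rw [hsplit] at ftc; linarith
    rw [heq, hCdef]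
    linarith
  refine ⟨C, hmain, ?_⟩
  have hq : Tendsto (fun x : ℝ => E 0 - C + (m / 2 * x ^ 2 - b * x)) atTop atTop := by
    apply tendsto_atTop_add_const_left
    have h : Tendsto (fun x : ℝ => x * (m / 2 * x - b)) atTop atTop := by
      apply Tendsto.atTop_mul_atTop₀ tendsto_id
      apply tendsto_atTop_add_const_right
      exact Tendsto.const_mul_atTop (by linarith) tendsto_id
    apply h.congr
    intro x; ring
  apply tendsto_atTop_mono _ (hq.comp tendsto_comap)
  intro u
  have h1 := hmain u
  have h2 : Real.log (1 + ‖u‖) ≤ ‖u‖ := by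
    have := Real.log_le_sub_one_of_pos (show (0:ℝ) < 1 + ‖u‖ by positivity)
    linarith
  have h3 : b * Real.log (1 + ‖u‖) ≤ b * ‖u‖ := by nlinarith
  simp only [Function.comp_apply]
  nlinarith [sq_nonneg ‖u‖]
end
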